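/- arXiv:2110.03401 — 2 statements merged into one kernel-verified Lean document; each statement's English description precedes it below -/
import Mathlib

section
/- Let f₁ and f₂ be multiplicative functions ℕ → ℂ such that, for j = 1,2, f_j satisfies with respect to an integer m_j ≥ 1 the conditions: (i) for some prime q dividing m_j, ∑_{k=0}^∞ f_j(q^k)/q^k = 0; (ii) for each prime power p^a exactly dividing m_j, f_j(p^k) = f_j(p^a) for all k ≥ a; (iii) for each prime p with gcd(p,m_j) = 1, f_j(p^k) = 1 for all k ≥ 1. Let f = f₁ ∗ f₂. Then for any a > 0 such that Δ(x) = O(x^a) as x → ∞, we also have ∑_{n≤x} f(n) = O(x^a) as x → ∞. -/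
open Filter Asymptotics

/-- `f` is multiplicative: `f 1 = 1` and `f (m*n) = f m * f n` for coprime `m, n`. -/
def IsMultiplicativeFn (f : ℕ → ℂ) : Prop :=
  f 1 = 1 ∧ ∀ m n : ℕ, Nat.Coprime m n → f (m * n) = f m * f n

/-- Conditions i-iii of Theorem 2 with respect to the integer `m`. -/
def SatisfiesConds (f : ℕ → ℂ) (m : ℕ) : Prop :=
  (∃ q : ℕ, q.Prime ∧ q ∣ m ∧ ∑' k : ℕ, f (q ^ k) / (q : ℂ) ^ k = 0) ∧
  (∀ p a : ℕ, p.Prime → p ^ a ∣ m → ¬ p ^ (a + 1) ∣ m →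
    ∀ k : ℕ, a ≤ k → f (p ^ k) = f (p ^ a)) ∧
  (∀ p : ℕ, p.Prime → Nat.Coprime p m → ∀ k : ℕ, 1 ≤ k → f (p ^ k) = 1)

/-- Dirichlet convolution. -/
noncomputable def dconv (f g : ℕ → ℂ) : ℕ → ℂ :=
  fun n => ∑ d ∈ n.divisors, f d * g (n / d)

/-- The error term in the Dirichlet divisor problem. -/
noncomputable def Δ (x : ℝ) : ℝ :=
  (∑ n ∈ Finset.Icc 1 ⌊x⌋₊, (n.divisors.card : ℝ)) - x * Real.log x -
    (2 * Real.eulerMascheroniConstant - 1) * x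

/-
Write `fⱼ = gⱼ ∗ 1` with `gⱼ = fⱼ ∗ μ`. By (ii), `gⱼ(pᵏ) = fⱼ(pᵏ) - fⱼ(pᵏ⁻¹)` vanishes as soon
as `pᵏ ∤ mⱼ`, so `gⱼ` is supported on the divisors of `mⱼ`, and `f = g₁ ∗ g₂ ∗ τ` gives, for
`x ≥ m₁m₂`, `∑_{n ≤ x} f(n) = ∑_{d ∣ m₁, e ∣ m₂} g₁(d) g₂(e) ∑_{n ≤ x/de} τ(n)`.
Inserting `∑_{n ≤ y} τ(n) = y log y + (2γ - 1) y + Δ(y)`, the main terms are combinations of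
`∑_{d ∣ mⱼ} gⱼ(d)/d` and `∑_{d ∣ mⱼ} gⱼ(d) log d / d`, and they cancel because
`∑_{d ∣ mⱼ} gⱼ(d)/d = 0`: as a function of `mⱼ` this sum is multiplicative, and its factor at
the prime `q` of (i) is `(1 - 1/q) ∑_k fⱼ(qᵏ)/qᵏ = 0`. What remains is a fixed linear
combination of the `Δ(x/de)`.
-/

open ArithmeticFunction Finset
open scoped ArithmeticFunction.zeta ArithmeticFunction.Moebius ArithmeticFunction.sigma
open scoped LSeries.notation

section

variable {f : ℕ → ℂ} {m : ℕ}

lemma IsMultiplicativeFn.isMultiplicative_toArithmeticFunction (hf : IsMultiplicativeFn f) :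
    (toArithmeticFunction f).IsMultiplicative := by
  refine ⟨by simp [toArithmeticFunction, hf.1], fun {m n} hmn => ?_⟩
  rcases eq_or_ne m 0 with rfl | hm
  · simp
  rcases eq_or_ne n 0 with rfl | hn
  · simp
  simp [toArithmeticFunction, hm, hn, hf.2 m n hmn]

lemma dconv_eq_toArithmeticFunction_mul (f g : ℕ → ℂ) :
    dconv f g = ⇑(toArithmeticFunction f * toArithmeticFunction g) := by
  ext n
  change _ = (f ⍟ g) n
  rw [LSeries.convolution_def]
  exact (Nat.sum_divisorsAntidiagonal fun a b => f a * g b).symm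

noncomputable def moebiusTransform (f : ℕ → ℂ) : ArithmeticFunction ℂ :=
  toArithmeticFunction f * μ

lemma moebiusTransform_mul_zeta (f : ℕ → ℂ) :
    moebiusTransform f * ζ = toArithmeticFunction f := by
  rw [moebiusTransform, mul_assoc, coe_moebius_mul_coe_zeta, mul_one]

lemma IsMultiplicativeFn.isMultiplicative_moebiusTransform (hf : IsMultiplicativeFn f) :
    (moebiusTransform f).IsMultiplicative :=
  hf.isMultiplicative_toArithmeticFunction.mul isMultiplicative_moebius.intCast

lemma sum_range_moebiusTransform_prime_pow {p : ℕ} (hp : p.Prime) (k : ℕ) :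
    ∑ i ∈ range (k + 1), moebiusTransform f (p ^ i) = f (p ^ k) := by
  rw [← Nat.sum_divisors_prime_pow hp, ← coe_mul_zeta_apply, moebiusTransform_mul_zeta]
  simp [toArithmeticFunction, hp.ne_zero]

lemma moebiusTransform_prime_pow_succ {p : ℕ} (hp : p.Prime) (k : ℕ) :
    moebiusTransform f (p ^ (k + 1)) = f (p ^ (k + 1)) - f (p ^ k) := by
  rw [← sum_range_moebiusTransform_prime_pow (f := f) hp (k + 1),
    ← sum_range_moebiusTransform_prime_pow (f := f) hp k, sum_range_succ _ (k + 1)]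
  ring

lemma SatisfiesConds.apply_prime_pow_of_factorization_le (h : SatisfiesConds f m) (hm : m ≠ 0)
    {p k : ℕ} (hp : p.Prime) (hk : m.factorization p ≤ k) :
    f (p ^ k) = f (p ^ m.factorization p) :=
  h.2.1 p _ hp (Nat.ordProj_dvd m p) (Nat.pow_succ_factorization_not_dvd hm hp) k hk

lemma SatisfiesConds.moebiusTransform_prime_pow_eq_zero (h : SatisfiesConds f m) (hm : m ≠ 0)
    {p k : ℕ} (hp : p.Prime) (hk : m.factorization p < k) :
    moebiusTransform f (p ^ k) = 0 := by
  obtain ⟨k, rfl⟩ := Nat.exists_eq_add_of_lt hk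
  rw [moebiusTransform_prime_pow_succ hp, sub_eq_zero,
    h.apply_prime_pow_of_factorization_le hm hp (by omega : _ ≤ _ + k + 1),
    h.apply_prime_pow_of_factorization_le hm hp (by omega : _ ≤ _ + k)]

lemma ArithmeticFunction.IsMultiplicative.eq_zero_of_not_dvd {R : Type*} [CommMonoidWithZero R]
    {g : ArithmeticFunction R} (hg : g.IsMultiplicative) (hm : m ≠ 0)
    (hpow : ∀ p k, p.Prime → m.factorization p < k → g (p ^ k) = 0) {n : ℕ} (hn : ¬ n ∣ m) :
    g n = 0 := by
  rcases eq_or_ne n 0 with rfl | hn0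
  · exact g.map_zero
  obtain ⟨p, hp⟩ : ∃ p, m.factorization p < n.factorization p := by
    simpa [Finsupp.le_def] using mt (Nat.factorization_le_iff_dvd hn0 hm).mp hn
  have hpn : p ∈ n.factorization.support := Finsupp.mem_support_iff.mpr (by omega)
  rw [hg.multiplicative_factorization g hn0, Finsupp.prod]
  exact prod_eq_zero hpn (hpow p _ (Nat.prime_of_mem_primeFactors hpn) hp)

lemma summable_pow_div_of_eventually_const {q c : ℕ} (hq : 1 < q)
    (hconst : ∀ k, c ≤ k → f (q ^ k) = f (q ^ c)) :
    Summable fun k => f (q ^ k) / (q : ℂ) ^ k := by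
  have hr : ‖(q : ℂ)⁻¹‖ < 1 := by
    rw [norm_inv, Complex.norm_natCast]
    exact inv_lt_one_of_one_lt₀ (by exact_mod_cast hq)
  refine (summable_nat_add_iff c).mp ?_
  have htail : (fun k => f (q ^ (k + c)) / (q : ℂ) ^ (k + c)) =
      fun k => f (q ^ c) / (q : ℂ) ^ c * (q : ℂ)⁻¹ ^ k := by
    ext k
    rw [hconst _ (by omega), pow_add, inv_pow]
    ring
  rw [htail]
  exact (summable_geometric_of_norm_lt_one hr).mul_left _

lemma HasSum.moebiusTransform_prime_pow_div {q : ℕ} (hq : q.Prime) {S : ℂ}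
    (hS : HasSum (fun k => f (q ^ k) / (q : ℂ) ^ k) S) :
    HasSum (fun k => moebiusTransform f (q ^ k) / (q : ℂ) ^ k) ((1 - (q : ℂ)⁻¹) * S) := by
  have hshift : HasSum (fun k => f (q ^ (k + 1)) / (q : ℂ) ^ (k + 1) -
      (q : ℂ)⁻¹ * (f (q ^ k) / (q : ℂ) ^ k)) (S - f 1 - (q : ℂ)⁻¹ * S) := by
    refine HasSum.sub ?_ (hS.mul_left _)
    simpa using (hasSum_nat_add_iff' 1).mpr hS
  have hg1 : moebiusTransform f 1 = f 1 := by
    simpa using sum_range_moebiusTransform_prime_pow (f := f) hq 0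
  have hterm : ∀ k, moebiusTransform f (q ^ (k + 1)) / (q : ℂ) ^ (k + 1) =
      f (q ^ (k + 1)) / (q : ℂ) ^ (k + 1) - (q : ℂ)⁻¹ * (f (q ^ k) / (q : ℂ) ^ k) := by
    intro k
    rw [moebiusTransform_prime_pow_succ hq]
    field_simp
    ring
  have hsum : (1 - (q : ℂ)⁻¹) * S - ∑ i ∈ range 1, moebiusTransform f (q ^ i) / (q : ℂ) ^ i =
      S - f 1 - (q : ℂ)⁻¹ * S := by
    simp only [range_one, sum_singleton, pow_zero, hg1, div_one]
    ring
  rw [← hasSum_nat_add_iff' 1, hsum]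
  simpa only [hterm] using hshift

lemma SatisfiesConds.sum_divisors_moebiusTransform_div_eq_zero (hf : IsMultiplicativeFn f)
    (h : SatisfiesConds f m) (hm : m ≠ 0) :
    ∑ d ∈ m.divisors, moebiusTransform f d / d = 0 := by
  obtain ⟨q, hq, -, hS⟩ := h.1
  set c := m.factorization q
  set H : ArithmeticFunction ℂ := (moebiusTransform f).pdiv ArithmeticFunction.id * ζ
  have hH : H.IsMultiplicative :=
    (hf.isMultiplicative_moebiusTransform.pdiv isMultiplicative_id.natCast).mul
      isMultiplicative_zeta.natCast
  have hH_apply (n : ℕ) : H n = ∑ d ∈ n.divisors, moebiusTransform f d / d := by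
    simp only [H, coe_mul_zeta_apply, pdiv_apply, natCoe_apply, id_apply]
  have hlocal : H (q ^ c) = 0 := by
    have hsummable : Summable fun k => f (q ^ k) / (q : ℂ) ^ k :=
      summable_pow_div_of_eventually_const hq.one_lt
        fun k hk => h.apply_prime_pow_of_factorization_le hm hq hk
    have hzero := hsummable.hasSum.moebiusTransform_prime_pow_div hq
    rw [hS, mul_zero] at hzero
    rw [hH_apply, Nat.sum_divisors_prime_pow hq]
    refine (hasSum_sum_of_ne_finset_zero fun k hk => ?_).unique (by simpa using hzero)
    rw [h.moebiusTransform_prime_pow_eq_zero hm hq (by simpa using hk), zero_div]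
  calc ∑ d ∈ m.divisors, moebiusTransform f d / d = H (q ^ c * (m / q ^ c)) := by
        rw [Nat.ordProj_mul_ordCompl_eq_self, hH_apply]
    _ = 0 := by
        rw [hH.map_mul_of_coprime ((Nat.coprime_ordCompl hq hm).pow_left c), hlocal, zero_mul]

lemma SatisfiesConds.moebiusTransform_eq_zero_of_not_dvd (hf : IsMultiplicativeFn f)
    (h : SatisfiesConds f m) (hm : m ≠ 0) {n : ℕ} (hn : ¬ n ∣ m) :
    moebiusTransform f n = 0 :=
  hf.isMultiplicative_moebiusTransform.eq_zero_of_not_dvd hm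
    (fun _ _ hp hk => h.moebiusTransform_prime_pow_eq_zero hm hp hk) hn

lemma ArithmeticFunction.sum_Ioc_mul_eq_sum_divisors {R : Type*} [Semiring R]
    {u v : ArithmeticFunction R} (hm : m ≠ 0) (hu : ∀ n, ¬ n ∣ m → u n = 0) {N : ℕ}
    (hN : m ≤ N) :
    ∑ n ∈ Ioc 0 N, (u * v) n = ∑ d ∈ m.divisors, u d * ∑ e ∈ Ioc 0 (N / d), v e := by
  rw [sum_Ioc_mul_eq_sum_sum]
  refine (sum_subset (fun d hd => ?_) fun d _ hd => ?_).symm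
  · have hdm := Nat.mem_divisors.mp hd
    exact mem_Ioc.mpr
      ⟨Nat.pos_of_dvd_of_pos hdm.1 (by omega), (Nat.le_of_dvd (by omega) hdm.1).trans hN⟩
  · rw [hu d fun hdm => hd (Nat.mem_divisors.mpr ⟨hdm, hm⟩), zero_mul]

lemma sum_Icc_dconv_eq {f₁ f₂ : ℕ → ℂ} {m₁ m₂ : ℕ} (hm₁ : m₁ ≠ 0) (hm₂ : m₂ ≠ 0)
    (hg₁ : ∀ n, ¬ n ∣ m₁ → moebiusTransform f₁ n = 0)
    (hg₂ : ∀ n, ¬ n ∣ m₂ → moebiusTransform f₂ n = 0) {N : ℕ} (hN : m₁ * m₂ ≤ N) :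
    ∑ n ∈ Icc 1 N, dconv f₁ f₂ n = ∑ d ∈ m₁.divisors, ∑ e ∈ m₂.divisors,
      moebiusTransform f₁ d * moebiusTransform f₂ e *
        ∑ n ∈ Icc 1 (N / d / e), (n.divisors.card : ℂ) := by
  have hfactor : toArithmeticFunction f₁ * toArithmeticFunction f₂ =
      moebiusTransform f₁ * (moebiusTransform f₂ * ↑(σ 0)) := by
    rw [← moebiusTransform_mul_zeta f₁, ← moebiusTransform_mul_zeta f₂, ← zeta_mul_pow_eq_sigma,
      pow_zero_eq_zeta, natCoe_mul]
    ring
  have hτ (n : ℕ) : (↑(σ 0) : ArithmeticFunction ℂ) n = n.divisors.card := by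
    simp [sigma_zero_apply]
  have hIcc (K : ℕ) : Icc 1 K = Ioc 0 K := Icc_add_one_left_eq_Ioc 0 K
  simp only [dconv_eq_toArithmeticFunction_mul, hfactor, hIcc]
  rw [sum_Ioc_mul_eq_sum_divisors hm₁ hg₁ ((Nat.le_mul_of_pos_right m₁ (by omega)).trans hN)]
  refine sum_congr rfl fun d hd => ?_
  rw [sum_Ioc_mul_eq_sum_divisors hm₂ hg₂, mul_sum]
  · simp only [hτ, mul_assoc]
  · rw [Nat.le_div_iff_mul_le (Nat.pos_of_mem_divisors hd)]
    exact (Nat.mul_le_mul_left m₂ (Nat.divisor_le hd)).trans (by rwa [mul_comm])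

end

noncomputable def divisorMainTerm (y : ℝ) : ℝ :=
  y * Real.log y + (2 * Real.eulerMascheroniConstant - 1) * y

lemma sum_Icc_card_divisors_eq (y : ℝ) :
    ∑ n ∈ Icc 1 ⌊y⌋₊, (n.divisors.card : ℝ) = divisorMainTerm y + Δ y := by
  rw [Δ, divisorMainTerm]
  ring

lemma sum_mul_divisorMainTerm_div {t : Finset ℕ} {v : ℕ → ℂ} (ht : ∀ e ∈ t, 0 < e)
    (hv : ∑ e ∈ t, v e / e = 0) {y : ℝ} (hy : 0 < y) :
    ∑ e ∈ t, v e * (divisorMainTerm (y / e) : ℂ) = -y * ∑ e ∈ t, v e * Real.log e / e := by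
  have hterm : ∀ e ∈ t, v e * (divisorMainTerm (y / e) : ℂ) =
      y * (Real.log y + 2 * Real.eulerMascheroniConstant - 1) * (v e / e) -
        y * (v e * Real.log e / e) := by
    intro e he
    have he0 : (0 : ℝ) < e := by exact_mod_cast ht e he
    rw [divisorMainTerm, Real.log_div hy.ne' he0.ne']
    push_cast
    field_simp
    ring
  rw [sum_congr rfl hterm, sum_sub_distrib, ← mul_sum, ← mul_sum, hv]
  ring

lemma sum_sum_mul_divisorMainTerm_eq_zero {s t : Finset ℕ} {u v : ℕ → ℂ}
    (hs : ∀ d ∈ s, 0 < d) (ht : ∀ e ∈ t, 0 < e) (hu : ∑ d ∈ s, u d / d = 0)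
    (hv : ∑ e ∈ t, v e / e = 0) {x : ℝ} (hx : 0 < x) :
    ∑ d ∈ s, ∑ e ∈ t, u d * v e * (divisorMainTerm (x / d / e) : ℂ) = 0 := by
  have hinner : ∀ d ∈ s, ∑ e ∈ t, u d * v e * (divisorMainTerm (x / d / e) : ℂ) =
      -x * (∑ e ∈ t, v e * Real.log e / e) * (u d / d) := by
    intro d hd
    have hd0 : (0 : ℝ) < d := by exact_mod_cast hs d hd
    simp only [mul_assoc, ← mul_sum]
    rw [sum_mul_divisorMainTerm_div ht hv (div_pos hx hd0)]
    push_cast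
    field_simp
  rw [sum_congr rfl hinner, ← mul_sum, hu, mul_zero]

lemma Asymptotics.IsBigO.comp_div_const {E : Type*} [Norm E] {F : ℝ → E} {a c : ℝ}
    (hF : F =O[atTop] fun x => x ^ a) (hc : 0 < c) :
    (fun x => F (x / c)) =O[atTop] fun x => x ^ a := by
  refine (hF.comp_tendsto (tendsto_id.atTop_div_const hc)).trans ?_
  refine ((isBigO_refl (fun x : ℝ => x ^ a) atTop).const_mul_left (c ^ a)⁻¹).congr' ?_ .rfl
  filter_upwards [eventually_ge_atTop 0] with x hx
  rw [Function.comp_apply, id, Real.div_rpow hx hc.le, div_eq_inv_mul]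

theorem stmt_5_general (f₁ f₂ : ℕ → ℂ) (m₁ m₂ : ℕ) (hm₁ : 1 ≤ m₁) (hm₂ : 1 ≤ m₂)
    (hmul₁ : IsMultiplicativeFn f₁) (hmul₂ : IsMultiplicativeFn f₂)
    (h₁ : SatisfiesConds f₁ m₁) (h₂ : SatisfiesConds f₂ m₂)
    (a : ℝ) (hΔ : Δ =O[atTop] fun x : ℝ => x ^ a) :
    (fun x : ℝ => ∑ n ∈ Finset.Icc 1 ⌊x⌋₊, dconv f₁ f₂ n) =O[atTop]
      fun x : ℝ => x ^ a := by
  have hm₁0 : m₁ ≠ 0 := by omega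
  have hm₂0 : m₂ ≠ 0 := by omega
  have hsum_eq : (fun x : ℝ => ∑ n ∈ Icc 1 ⌊x⌋₊, dconv f₁ f₂ n) =ᶠ[atTop]
      fun x => ∑ d ∈ m₁.divisors, ∑ e ∈ m₂.divisors,
        moebiusTransform f₁ d * moebiusTransform f₂ e * (Δ (x / d / e) : ℂ) := by
    filter_upwards [eventually_gt_atTop 0, eventually_ge_atTop ((m₁ * m₂ : ℕ) : ℝ)]
      with x hx hxm
    rw [sum_Icc_dconv_eq hm₁0 hm₂0 (fun _ => h₁.moebiusTransform_eq_zero_of_not_dvd hmul₁ hm₁0)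
      (fun _ => h₂.moebiusTransform_eq_zero_of_not_dvd hmul₂ hm₂0) (Nat.le_floor hxm)]
    have hτ (y : ℝ) : ∑ n ∈ Icc 1 ⌊y⌋₊, (n.divisors.card : ℂ) = divisorMainTerm y + Δ y := by
      exact_mod_cast sum_Icc_card_divisors_eq y
    simp only [← Nat.floor_div_natCast, hτ, mul_add, sum_add_distrib]
    rw [sum_sum_mul_divisorMainTerm_eq_zero (fun _ => Nat.pos_of_mem_divisors)
      (fun _ => Nat.pos_of_mem_divisors) (h₁.sum_divisors_moebiusTransform_div_eq_zero hmul₁ hm₁0)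
      (h₂.sum_divisors_moebiusTransform_div_eq_zero hmul₂ hm₂0) hx, zero_add]
  refine IsBigO.congr' ?_ hsum_eq.symm .rfl
  refine IsBigO.fun_sum fun d hd => IsBigO.fun_sum fun e he => ?_
  have hd0 : (0 : ℝ) < d := by exact_mod_cast Nat.pos_of_mem_divisors hd
  have he0 : (0 : ℝ) < e := by exact_mod_cast Nat.pos_of_mem_divisors he
  exact (Complex.isBigO_ofReal_left.mpr
    ((hΔ.comp_div_const he0).comp_div_const hd0)).const_mul_left _

theorem stmt_5 (f₁ f₂ : ℕ → ℂ) (m₁ m₂ : ℕ) (hm₁ : 1 ≤ m₁) (hm₂ : 1 ≤ m₂)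
    (hmul₁ : IsMultiplicativeFn f₁) (hmul₂ : IsMultiplicativeFn f₂)
    (h₁ : SatisfiesConds f₁ m₁) (h₂ : SatisfiesConds f₂ m₂)
    (a : ℝ) (ha : 0 < a) (hΔ : Δ =O[atTop] fun x : ℝ => x ^ a) :
    (fun x : ℝ => ∑ n ∈ Finset.Icc 1 ⌊x⌋₊, dconv f₁ f₂ n) =O[atTop]
      fun x : ℝ => x ^ a :=
  stmt_5_general f₁ f₂ m₁ m₂ hm₁ hm₂ hmul₁ hmul₂ h₁ h₂ a hΔ
end

section
/- Let f₁ and f₂ be multiplicative functions ℕ → ℂ such that, for j = 1,2, f_j satisfies with respect to an integer m_j ≥ 1 the conditions: (i) for some prime q dividing m_j, ∑_{k=0}^∞ f_j(q^k)/q^k = 0; (ii) for each prime power p^a exactly dividing m_j, f_j(p^k) = f_j(p^a) for all k ≥ a; (iii) for each prime p with gcd(p,m_j) = 1, f_j(p^k) = 1 for all k ≥ 1. Let g = f₁ ∗ f₂ ∗ μ ∗ μ, where μ is the Möbius function. Then the series ∑_{n=1}^∞ g(n)/n and ∑_{n=1}^∞ g(n)·log n / n both converge absolutely and both equal 0. 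-/
/-- The Möbius function, complex valued. -/
def moebiusC : ℕ → ℂ := fun n => ((ArithmeticFunction.moebius n : ℤ) : ℂ)

/-!
Put `H_j = f_j ∗ μ`. Condition (ii) makes `H_j (p ^ k) = f_j (p ^ k) - f_j (p ^ (k - 1))` vanish
for `k > v_p(m_j)`, so the multiplicative function `H_j` is supported on the divisors of `m_j`,
and `g = H₁ ∗ H₂` is supported on the divisors of `m₁ m₂`: every series in the statement is a
finite sum. Their values are L-series at `s = 1`: `L(g, 1) = L(H₁, 1) L(H₂, 1)` and, since `log`
is a derivation for Dirichlet convolution,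
`L(g log, 1) = L(H₁ log, 1) L(H₂, 1) + L(H₁, 1) L(H₂ log, 1)`.
Finally `L(H_j, 1)` is the Euler product of the finite sums `∑_{i ≤ v_p(m_j)} H_j(p^i) / p^i`, and
at the prime `q` of (i) this factor equals `(1 - 1/q) ∑_k f_j(q^k) / q^k = 0`.
-/

open ArithmeticFunction Finset LSeries
open scoped ArithmeticFunction.Moebius ArithmeticFunction.zeta LSeries.notation

theorem Summable.one_sub_mul_tsum_eq_add_sum_range {R : Type*} [Ring R] [TopologicalSpace R]
    [IsTopologicalRing R] [T2Space R] {u : ℕ → R} (hu : Summable u) (r : R) {a : ℕ}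
    (ha : ∀ k, a ≤ k → u (k + 1) = r * u k) :
    (1 - r) * ∑' k, u k = u 0 + ∑ k ∈ range a, (u (k + 1) - r * u k) := by
  have hshift : Summable fun k => u (k + 1) := (summable_nat_add_iff 1).mpr hu
  rw [sub_mul, one_mul, ← hu.tsum_mul_left, hu.tsum_eq_zero_add, add_sub_assoc,
    ← hshift.tsum_sub (hu.mul_left r), tsum_eq_sum (s := range a)]
  intro k hk
  rw [ha k (by simpa using hk), sub_self]

namespace ArithmeticFunction

theorem mul_moebius_apply_prime_pow_succ {R : Type*} [CommRing R] (F : ArithmeticFunction R)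
    {p : ℕ} (hp : p.Prime) (k : ℕ) :
    (F * μ) (p ^ (k + 1)) = F (p ^ (k + 1)) - F (p ^ k) := by
  have hF : ∀ n, F (p ^ n) = ∑ i ∈ range (n + 1), (F * μ) (p ^ i) := fun n => by
    rw [← Nat.sum_divisors_prime_pow hp, ← coe_mul_zeta_apply, mul_assoc,
      coe_moebius_mul_coe_zeta, mul_one]
  rw [hF (k + 1), hF k, sum_range_succ, add_sub_cancel_left]

theorem IsMultiplicative.eq_zero_of_not_dvd_s10 {R : Type*} [CommMonoidWithZero R]
    {F : ArithmeticFunction R} (hF : F.IsMultiplicative) {m : ℕ} (hm : m ≠ 0)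
    (hF_pow : ∀ p k, p.Prime → m.factorization p < k → F (p ^ k) = 0) {n : ℕ} (hn : ¬ n ∣ m) :
    F n = 0 := by
  rcases eq_or_ne n 0 with rfl | hn0
  · exact F.map_zero
  obtain ⟨p, hp⟩ : ∃ p, m.factorization p < n.factorization p := by
    by_contra! h
    exact hn ((Nat.factorization_le_iff_dvd hn0 hm).mp (Finsupp.le_def.mpr h))
  have hp_mem : p ∈ n.factorization.support := Finsupp.mem_support_iff.mpr (by omega)
  rw [hF.multiplicative_factorization F hn0]
  exact prod_eq_zero hp_mem <|
    hF_pow p _ (Nat.prime_of_mem_primeFactors (Nat.support_factorization n ▸ hp_mem)) hp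

theorem IsMultiplicative.sum_divisors_eq_zero {R : Type*} [CommSemiring R]
    {F : ArithmeticFunction R} (hF : F.IsMultiplicative) {m q : ℕ} (hm : m ≠ 0) (hq : q.Prime)
    (hF_q : ∑ i ∈ range (m.factorization q + 1), F (q ^ i) = 0) :
    ∑ d ∈ m.divisors, F d = 0 := by
  have hcop : (q ^ m.factorization q).Coprime (m / q ^ m.factorization q) :=
    (Nat.coprime_ordCompl hq hm).pow_left _
  rw [← coe_mul_zeta_apply, ← Nat.ordProj_mul_ordCompl_eq_self m q,
    (hF.mul isMultiplicative_zeta.natCast).map_mul_of_coprime hcop, coe_mul_zeta_apply,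
    Nat.sum_divisors_prime_pow hq, hF_q, zero_mul]

theorem sum_range_mul_moebius_div_pow {F : ArithmeticFunction ℂ} {q a : ℕ} (hq : q.Prime)
    (hF : ∀ k, a ≤ k → F (q ^ (k + 1)) = F (q ^ k)) :
    ∑ i ∈ range (a + 1), (F * μ) (q ^ i) / (q : ℂ) ^ i =
      (1 - (q : ℂ)⁻¹) * ∑' k, F (q ^ k) / (q : ℂ) ^ k := by
  set u : ℕ → ℂ := fun k => F (q ^ k) / (q : ℂ) ^ k
  have hu : ∀ k, a ≤ k → u (k + 1) = (q : ℂ)⁻¹ * u k := fun k hk => by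
    simp only [u]
    rw [hF k hk, pow_succ (q : ℂ)]
    field_simp
  have hr : ‖(q : ℂ)⁻¹‖ < 1 := by
    simpa [inv_lt_one_iff₀] using Or.inr hq.one_lt
  have hsum : Summable u := summable_of_ratio_norm_eventually_le hr <|
    Filter.eventually_atTop.mpr ⟨a, fun k hk => by rw [hu k hk, norm_mul]⟩
  rw [hsum.one_sub_mul_tsum_eq_add_sum_range _ hu, sum_range_succ', add_comm]
  congr 1
  · simp [u]
  · refine sum_congr rfl fun k _ => ?_
    simp only [u]
    rw [mul_moebius_apply_prime_pow_succ F hq, pow_succ (q : ℂ)]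
    field_simp

theorem IsMultiplicative.support_mul_moebius_subset {R : Type*} [CommRing R]
    {F : ArithmeticFunction R} (hF : F.IsMultiplicative) {m : ℕ} (hm : m ≠ 0)
    (hF_pow : ∀ p k, p.Prime → m.factorization p ≤ k → F (p ^ (k + 1)) = F (p ^ k)) :
    Function.support ⇑(F * (μ : ArithmeticFunction R)) ⊆ m.divisors := by
  intro n hn
  refine Nat.mem_divisors.mpr ⟨by_contra fun hdvd => hn ?_, hm⟩
  refine (hF.mul isMultiplicative_moebius.intCast).eq_zero_of_not_dvd_s10 hm
    (fun p k hp hk => ?_) hdvd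
  obtain ⟨j, rfl⟩ := Nat.exists_eq_add_of_lt hk
  rw [mul_moebius_apply_prime_pow_succ _ hp, hF_pow p _ hp (by omega), sub_self]

theorem IsMultiplicative.sum_divisors_mul_moebius_div_eq_zero {F : ArithmeticFunction ℂ}
    (hF : F.IsMultiplicative) {m q : ℕ} (hm : m ≠ 0) (hq : q.Prime)
    (hF_pow : ∀ p k, p.Prime → m.factorization p ≤ k → F (p ^ (k + 1)) = F (p ^ k))
    (hF_q : ∑' k, F (q ^ k) / (q : ℂ) ^ k = 0) :
    ∑ d ∈ m.divisors, (F * μ) d / d = 0 := by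
  have hK : ((F * μ).pdiv (ArithmeticFunction.id : ArithmeticFunction ℂ)).IsMultiplicative :=
    (hF.mul isMultiplicative_moebius.intCast).pdiv isMultiplicative_id.natCast
  have hK_q := sum_range_mul_moebius_div_pow hq (fun k hk => hF_pow q k hq hk)
  rw [hF_q, mul_zero] at hK_q
  simpa using hK.sum_divisors_eq_zero hm hq (by simpa using hK_q)

end ArithmeticFunction

namespace LSeries

theorem logMul_convolution (f g : ℕ → ℂ) : logMul (f ⍟ g) = logMul f ⍟ g + f ⍟ logMul g := by
  ext n
  simp only [logMul, convolution_def, Pi.add_apply, mul_sum, ← sum_add_distrib]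
  refine sum_congr rfl fun ⟨d, e⟩ hde => ?_
  obtain ⟨rfl, hn⟩ := Nat.mem_divisorsAntidiagonal.mp hde
  simp only [← Complex.natCast_log]
  rw [Nat.cast_mul, Real.log_mul (Nat.cast_ne_zero.mpr (left_ne_zero_of_mul hn))
    (Nat.cast_ne_zero.mpr (right_ne_zero_of_mul hn))]
  push_cast
  ring

theorem support_convolution_subset {R : Type*} [Semiring R] {f g : ℕ → R} {m₁ m₂ : ℕ}
    (hf : Function.support f ⊆ m₁.divisors) (hg : Function.support g ⊆ m₂.divisors) :
    Function.support (f ⍟ g) ⊆ (m₁ * m₂).divisors := by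
  intro n hn
  rw [Function.mem_support, convolution_def] at hn
  obtain ⟨⟨d, e⟩, hde, hne⟩ := exists_ne_zero_of_sum_ne_zero hn
  obtain ⟨rfl, -⟩ := Nat.mem_divisorsAntidiagonal.mp hde
  rw [Finset.mem_coe, Nat.divisors_mul]
  exact mul_mem_mul (hf (left_ne_zero_of_mul hne)) (hg (right_ne_zero_of_mul hne))

theorem support_logMul_subset (f : ℕ → ℂ) : Function.support (logMul f) ⊆ Function.support f :=
  Function.support_mul_subset_right _ _

theorem term_eq_zero_of_notMem_support {f : ℕ → ℂ} {n : ℕ} (hn : n ∉ Function.support f)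
    (s : ℂ) : term f s n = 0 := by
  simp_all [term_def]

end LSeries

theorem LSeriesSummable_of_support_subset {f : ℕ → ℂ} {s : Finset ℕ}
    (hf : Function.support f ⊆ s) (z : ℂ) : LSeriesSummable f z :=
  summable_of_ne_finset_zero fun _ hn => term_eq_zero_of_notMem_support (fun h => hn (hf h)) z

theorem LSeries_eq_sum_of_support_subset {f : ℕ → ℂ} {s : Finset ℕ}
    (hf : Function.support f ⊆ s) (z : ℂ) : LSeries f z = ∑ n ∈ s, term f z n :=
  tsum_eq_sum fun _ hn => term_eq_zero_of_notMem_support (fun h => hn (hf h)) z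

theorem LSeries_logMul_convolution {f g : ℕ → ℂ} {s : ℂ} (hf : LSeriesSummable f s)
    (hf_log : LSeriesSummable (logMul f) s) (hg : LSeriesSummable g s)
    (hg_log : LSeriesSummable (logMul g) s) :
    LSeries (logMul (f ⍟ g)) s =
      LSeries (logMul f) s * LSeries g s + LSeries f s * LSeries (logMul g) s := by
  rw [logMul_convolution, LSeries_add (hf_log.convolution hg) (hf.convolution hg_log),
    LSeries_convolution' hf_log hg, LSeries_convolution' hf hg_log]

theorem tsum_div_eq_LSeries_one {f : ℕ → ℂ} (hf : f 0 = 0) : ∑' n, f n / n = LSeries f 1 := by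
  simp [LSeries_def₀ hf]

theorem toArithmeticFunction_apply_of_ne_zero {R : Type*} [Zero R] (f : ℕ → R) {n : ℕ}
    (hn : n ≠ 0) : toArithmeticFunction f n = f n :=
  if_neg hn

theorem IsMultiplicativeFn.isMultiplicative {f : ℕ → ℂ} (hf : IsMultiplicativeFn f) :
    (toArithmeticFunction f).IsMultiplicative := by
  refine ArithmeticFunction.IsMultiplicative.iff_ne_zero.mpr ⟨?_, fun hm hn hmn => ?_⟩
  · rw [toArithmeticFunction_apply_of_ne_zero f one_ne_zero, hf.1]
  · simp only [toArithmeticFunction_apply_of_ne_zero f, hm, hn, mul_ne_zero, ne_eq,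
      not_false_eq_true]
    exact hf.2 _ _ hmn

theorem SatisfiesConds.apply_prime_pow_succ {f : ℕ → ℂ} {m : ℕ} (h : SatisfiesConds f m)
    (hm : m ≠ 0) {p k : ℕ} (hp : p.Prime) (hk : m.factorization p ≤ k) :
    toArithmeticFunction f (p ^ (k + 1)) = toArithmeticFunction f (p ^ k) := by
  have hconst := h.2.1 p _ hp (Nat.ordProj_dvd m p) (Nat.pow_succ_factorization_not_dvd hm hp)
  simp only [toArithmeticFunction_apply_of_ne_zero f (pow_ne_zero _ hp.ne_zero)]
  rw [hconst _ hk, hconst _ (by omega)]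

theorem SatisfiesConds.support_mul_moebius_subset {f : ℕ → ℂ} {m : ℕ} (h : SatisfiesConds f m)
    (hf : IsMultiplicativeFn f) (hm : m ≠ 0) :
    Function.support ⇑(toArithmeticFunction f * (μ : ArithmeticFunction ℂ)) ⊆ m.divisors :=
  hf.isMultiplicative.support_mul_moebius_subset hm fun _ _ hp hk => h.apply_prime_pow_succ hm hp hk

theorem SatisfiesConds.LSeries_mul_moebius_one {f : ℕ → ℂ} {m : ℕ} (h : SatisfiesConds f m)
    (hf : IsMultiplicativeFn f) (hm : m ≠ 0) :
    LSeries ⇑(toArithmeticFunction f * (μ : ArithmeticFunction ℂ)) 1 = 0 := by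
  obtain ⟨q, hq, -, hq_sum⟩ := h.1
  rw [LSeries_eq_sum_of_support_subset (h.support_mul_moebius_subset hf hm)]
  simp_rw [← toArithmeticFunction_apply_of_ne_zero f (pow_ne_zero _ hq.ne_zero)] at hq_sum
  rw [← hf.isMultiplicative.sum_divisors_mul_moebius_div_eq_zero hm hq
    (fun _ _ hp hk => h.apply_prime_pow_succ hm hp hk) hq_sum]
  refine sum_congr rfl fun d hd => ?_
  rw [term_of_ne_zero (Nat.pos_of_mem_divisors hd).ne', Complex.cpow_one]

theorem dconv_eq_convolution (f g : ℕ → ℂ) : dconv f g = f ⍟ g := by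
  rw [convolution_def]
  ext n
  exact (Nat.sum_divisorsAntidiagonal (fun d e => f d * g e)).symm

theorem toArithmeticFunction_moebiusC :
    toArithmeticFunction moebiusC = (μ : ArithmeticFunction ℂ) := by
  ext n
  rcases eq_or_ne n 0 with rfl | hn
  · simp
  · simp [toArithmeticFunction_apply_of_ne_zero _ hn, moebiusC]

theorem dconv_dconv_moebiusC_moebiusC (f₁ f₂ : ℕ → ℂ) :
    dconv (dconv (dconv f₁ f₂) moebiusC) moebiusC =
      ⇑(toArithmeticFunction f₁ * (μ : ArithmeticFunction ℂ)) ⍟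
        ⇑(toArithmeticFunction f₂ * (μ : ArithmeticFunction ℂ)) := by
  simp only [dconv_eq_convolution, LSeries.convolution, toArithmeticFunction_eq_self,
    toArithmeticFunction_moebiusC]
  congr 1
  ring

theorem stmt_10 (f₁ f₂ : ℕ → ℂ) (m₁ m₂ : ℕ) (hm₁ : 1 ≤ m₁) (hm₂ : 1 ≤ m₂)
    (hmul₁ : IsMultiplicativeFn f₁) (hmul₂ : IsMultiplicativeFn f₂)
    (h₁ : SatisfiesConds f₁ m₁) (h₂ : SatisfiesConds f₂ m₂) :
    letI g := dconv (dconv (dconv f₁ f₂) moebiusC) moebiusC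
    Summable (fun n : ℕ => ‖g n / (n : ℂ)‖) ∧
    Summable (fun n : ℕ => ‖g n * (Real.log n : ℂ) / (n : ℂ)‖) ∧
    ∑' n : ℕ, g n / (n : ℂ) = 0 ∧
    ∑' n : ℕ, g n * (Real.log n : ℂ) / (n : ℂ) = 0 := by
  simp only [dconv_dconv_moebiusC_moebiusC]
  set H₁ : ℕ → ℂ := ⇑(toArithmeticFunction f₁ * (μ : ArithmeticFunction ℂ))
  set H₂ : ℕ → ℂ := ⇑(toArithmeticFunction f₂ * (μ : ArithmeticFunction ℂ))
  have hsupp₁ : Function.support H₁ ⊆ m₁.divisors := h₁.support_mul_moebius_subset hmul₁ (by omega)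
  have hsupp₂ : Function.support H₂ ⊆ m₂.divisors := h₂.support_mul_moebius_subset hmul₂ (by omega)
  have hL₁ : LSeries H₁ 1 = 0 := h₁.LSeries_mul_moebius_one hmul₁ (by omega)
  have hL₂ : LSeries H₂ 1 = 0 := h₂.LSeries_mul_moebius_one hmul₂ (by omega)
  have hvanish : ∀ n ∉ (m₁ * m₂).divisors, (H₁ ⍟ H₂) n = 0 := fun n hn =>
    Function.notMem_support.mp fun h => hn (support_convolution_subset hsupp₁ hsupp₂ h)
  have hlog : ∀ n : ℕ, (H₁ ⍟ H₂) n * (Real.log n : ℂ) / n = logMul (H₁ ⍟ H₂) n / n :=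
    fun n => by rw [logMul, Complex.natCast_log, mul_comm]
  have hsum₁ := LSeriesSummable_of_support_subset hsupp₁ 1
  have hsum₂ := LSeriesSummable_of_support_subset hsupp₂ 1
  have hsum_log₁ := LSeriesSummable_of_support_subset ((support_logMul_subset H₁).trans hsupp₁) 1
  have hsum_log₂ := LSeriesSummable_of_support_subset ((support_logMul_subset H₂).trans hsupp₂) 1
  refine ⟨summable_of_ne_finset_zero (s := (m₁ * m₂).divisors) fun n hn => by simp [hvanish n hn],
    summable_of_ne_finset_zero (s := (m₁ * m₂).divisors) fun n hn => by simp [hvanish n hn], ?_, ?_⟩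
  · rw [tsum_div_eq_LSeries_one (convolution_map_zero _ _), LSeries_convolution' hsum₁ hsum₂, hL₁,
      zero_mul]
  · rw [tsum_congr hlog, tsum_div_eq_LSeries_one (by simp [logMul]),
      LSeries_logMul_convolution hsum₁ hsum_log₁ hsum₂ hsum_log₂, hL₁, hL₂, mul_zero, zero_mul,
      add_zero]
end
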